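/- Effective Putinar degree bound for volume computation: Let m ≥ 1, K := [−1,1]^m = S(f) with f := (1−x₁²,…,1−x_m²), and h ∈ ℝ[x₁,…,x_m]^r with X := S(h) ⊆ K; let λ denote Lebesgue measure and λ(X) the volume of X. Assume the effective Putinar hypothesis for (h, γ₁, Ł) and for (f, γ₂, 1), and set Ł̂ := max(Ł, 1). Assume there exist constants c_G ≥ 1 and C > 0 such that for every integer d ≥ 1 there exists a polynomial w_d of degree ≤ d with w_d ≥ 1 on X, w_d ≥ 0 on K, sup_K w_d ≤ c_G, and ∫_K w_d dλ ≤ λ(X) + C/(2d). Define for ℓ ∈ ℕ the value d_X^ℓ := inf{∫_K w dλ : w ∈ ℝ[x], w − 1 ∈ Q_ℓ(h), w ∈ Q_ℓ(f)}. Then there exists a constant C' > 0 such that for every ε ∈ (0,1) and every ℓ ∈ ℕ with ℓ ≥ max(γ₁,γ₂)·(C'/ε)^{3.5mŁ̂}·(1 + 2^{m+1}c_G/ε)^{2.5mŁ̂}, one has 0 ≤ d_X^ℓ − λ(X) ≤ ε. -/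

import Mathlib

open MvPolynomial

/-- A polynomial is a sum of squares. -/
def IsSOS {σ : Type*} (q : MvPolynomial σ ℝ) : Prop :=
  ∃ (k : ℕ) (p : Fin k → MvPolynomial σ ℝ), q = ∑ i, (p i) ^ 2

/-- Membership in the truncated quadratic module `Q_ℓ(h)`. -/
def memQM {σ : Type*} {r : ℕ} (h : Fin r → MvPolynomial σ ℝ) (ℓ : ℕ)
    (q : MvPolynomial σ ℝ) : Prop :=
  ∃ (σ₀ : MvPolynomial σ ℝ) (s : Fin r → MvPolynomial σ ℝ),
    IsSOS σ₀ ∧ (∀ i, IsSOS (s i)) ∧ σ₀.totalDegree ≤ 2 * ℓ ∧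
    (∀ i, (s i * h i).totalDegree ≤ 2 * ℓ) ∧ q = σ₀ + ∑ i, s i * h i

/-- The basic closed semialgebraic set `S(h)`. -/
def semialgSet {σ : Type*} {r : ℕ} (h : Fin r → MvPolynomial σ ℝ) :
    Set (σ → ℝ) := {x | ∀ i, 0 ≤ eval x (h i)}

/-- The box `[-1,1]^σ`. -/
def unitBox (σ : Type*) : Set (σ → ℝ) := {x | ∀ i, x i ∈ Set.Icc (-1 : ℝ) 1}

/-- `‖p‖ := sup_{[-1,1]^m} |p|`. -/
noncomputable def polyNorm {σ : Type*} (p : MvPolynomial σ ℝ) : ℝ :=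
  ⨆ x : unitBox σ, |eval (x : σ → ℝ) p|

/-- `min_S p`. -/
noncomputable def polyMinOn {σ : Type*} (S : Set (σ → ℝ)) (p : MvPolynomial σ ℝ) : ℝ :=
  sInf ((fun x => eval x p) '' S)

/-- The effective Putinar hypothesis for `(h, γ, L)`. -/
def EffectivePutinar {σ : Type*} {r : ℕ} (m : ℕ) (h : Fin r → MvPolynomial σ ℝ)
    (γ L : ℝ) : Prop :=
  ∀ (p : MvPolynomial σ ℝ) (ℓ : ℕ),
    0 < polyMinOn (semialgSet h) p →
    γ * (p.totalDegree : ℝ) ^ (3.5 * (m : ℝ) * L) *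
        (polyNorm p / polyMinOn (semialgSet h) p) ^ (2.5 * (m : ℝ) * L) ≤ (ℓ : ℝ) →
    memQM h ℓ p

/-! ### Auxiliary lemmas -/

section Aux

open MeasureTheory

-- SOS closure lemmas
lemma isSOS_zero {σ : Type*} : IsSOS (0 : MvPolynomial σ ℝ) :=
  ⟨0, Fin.elim0, by simp⟩

lemma isSOS_sq {σ : Type*} (p : MvPolynomial σ ℝ) : IsSOS (p ^ 2) :=
  ⟨1, fun _ => p, by simp⟩

lemma isSOS_add {σ : Type*} {p q : MvPolynomial σ ℝ} (hp : IsSOS p) (hq : IsSOS q) :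
    IsSOS (p + q) := by
  obtain ⟨k₁, f₁, rfl⟩ := hp
  obtain ⟨k₂, f₂, rfl⟩ := hq
  refine ⟨k₁ + k₂, Fin.append f₁ f₂, ?_⟩
  rw [Fin.sum_univ_add]
  simp [Fin.append_left, Fin.append_right]

lemma isSOS_sq_mul {σ : Type*} (p : MvPolynomial σ ℝ) {q : MvPolynomial σ ℝ}
    (hq : IsSOS q) : IsSOS (p ^ 2 * q) := by
  obtain ⟨k, f, rfl⟩ := hq
  refine ⟨k, fun i => p * f i, ?_⟩
  rw [Finset.mul_sum]
  simp [mul_pow]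

lemma isSOS_C {σ : Type*} {c : ℝ} (hc : 0 ≤ c) : IsSOS (C c : MvPolynomial σ ℝ) := by
  refine ⟨1, fun _ => C (Real.sqrt c), ?_⟩
  simp [← map_pow, Real.sq_sqrt hc]

lemma isSOS_C_mul {σ : Type*} {c : ℝ} (hc : 0 ≤ c) {q : MvPolynomial σ ℝ}
    (hq : IsSOS q) : IsSOS (C c * q) := by
  have := isSOS_sq_mul (σ := σ) (C (Real.sqrt c)) hq
  rwa [← map_pow, Real.sq_sqrt hc] at this

lemma isSOS_mul {σ : Type*} {p q : MvPolynomial σ ℝ} (hp : IsSOS p) (hq : IsSOS q) :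
    IsSOS (p * q) := by
  obtain ⟨k, f, rfl⟩ := hp
  induction k with
  | zero => simpa using isSOS_zero
  | succ n ih =>
      rw [Fin.sum_univ_castSucc, add_mul]
      exact isSOS_add (ih _) (isSOS_sq_mul _ hq)

lemma isSOS_finsetSum {σ ι : Type*} (s : Finset ι) (f : ι → MvPolynomial σ ℝ)
    (h : ∀ i ∈ s, IsSOS (f i)) : IsSOS (∑ i ∈ s, f i) :=
  Finset.sum_induction f IsSOS (fun _ _ => isSOS_add) isSOS_zero h

lemma eval_nonneg_of_isSOS {σ : Type*} {q : MvPolynomial σ ℝ} (hq : IsSOS q)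
    (x : σ → ℝ) : 0 ≤ eval x q := by
  obtain ⟨k, f, rfl⟩ := hq
  rw [map_sum]
  exact Finset.sum_nonneg fun i _ => by rw [map_pow]; positivity

lemma memQM_nonneg {σ : Type*} {r : ℕ} {h : Fin r → MvPolynomial σ ℝ} {ℓ : ℕ}
    {q : MvPolynomial σ ℝ} (hq : memQM h ℓ q) {x : σ → ℝ}
    (hx : x ∈ semialgSet h) : 0 ≤ eval x q := by
  obtain ⟨σ₀, s, hσ₀, hs, -, -, rfl⟩ := hq
  rw [map_add, map_sum]
  have h1 : 0 ≤ eval x σ₀ := eval_nonneg_of_isSOS hσ₀ x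
  have h2 : ∀ i ∈ Finset.univ, (0:ℝ) ≤ eval x (s i * h i) := fun i _ => by
    rw [map_mul]
    exact mul_nonneg (eval_nonneg_of_isSOS (hs i) x) (hx i)
  exact add_nonneg h1 (Finset.sum_nonneg h2)

-- unitBox lemmas
variable {m : ℕ}

lemma unitBox_eq : unitBox (Fin m) = Set.pi Set.univ (fun _ => Set.Icc (-1:ℝ) 1) := by
  ext x
  rw [Set.mem_pi]
  exact ⟨fun hx i _ => hx i, fun hx i => hx i trivial⟩

lemma unitBox_compact : IsCompact (unitBox (Fin m)) := by
  rw [unitBox_eq]; exact isCompact_univ_pi fun _ => isCompact_Icc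

lemma unitBox_measurable : MeasurableSet (unitBox (Fin m)) := by
  rw [unitBox_eq]; exact MeasurableSet.univ_pi fun _ => measurableSet_Icc

lemma unitBox_nonempty : (unitBox (Fin m)).Nonempty :=
  ⟨fun _ => 0, fun _ => by constructor <;> norm_num⟩

instance : Nonempty (unitBox (Fin m)) := unitBox_nonempty.to_subtype

lemma volume_unitBox : volume (unitBox (Fin m)) = ENNReal.ofReal (2 ^ m) := by
  rw [unitBox_eq, volume_pi_pi]
  simp [Real.volume_Icc, ← ENNReal.ofReal_pow]
  norm_num

lemma volume_unitBox_toReal : (volume (unitBox (Fin m))).toReal = 2 ^ m := by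
  rw [volume_unitBox, ENNReal.toReal_ofReal (by positivity)]

lemma unitBox_volume_ne_top : volume (unitBox (Fin m)) ≠ ⊤ := by
  rw [volume_unitBox]; exact ENNReal.ofReal_ne_top

lemma semialgSet_closed {r : ℕ} (h : Fin r → MvPolynomial (Fin m) ℝ) :
    IsClosed (semialgSet h) := by
  have : semialgSet h = ⋂ i, (fun x => eval x (h i)) ⁻¹' (Set.Ici 0) := by
    ext x; simp [semialgSet]
  rw [this]
  exact isClosed_iInter fun i => (isClosed_Ici).preimage (MvPolynomial.continuous_eval _)

lemma semialgSet_box : semialgSet (fun i : Fin m => 1 - X i ^ 2) = unitBox (Fin m) := by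
  ext x
  simp only [semialgSet, unitBox, Set.mem_setOf_eq, Set.mem_Icc]
  refine forall_congr' fun i => ?_
  rw [map_sub, map_one, map_pow, eval_X, sub_nonneg]
  constructor
  · intro h2; constructor <;> nlinarith
  · intro h2; nlinarith [h2.1, h2.2]

-- integration lemmas
lemma integrableOn_eval (p : MvPolynomial (Fin m) ℝ) :
    IntegrableOn (fun x => eval x p) (unitBox (Fin m)) volume :=
  (MvPolynomial.continuous_eval p).continuousOn.integrableOn_compact unitBox_compact

lemma polyNorm_le {p : MvPolynomial (Fin m) ℝ} {M : ℝ}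
    (hM : ∀ x ∈ unitBox (Fin m), |eval x p| ≤ M) : polyNorm p ≤ M :=
  ciSup_le fun x => hM x.1 x.2

lemma polyNorm_nonneg (p : MvPolynomial (Fin m) ℝ) : 0 ≤ polyNorm p :=
  Real.iSup_nonneg fun x => abs_nonneg _

lemma minOn_lower {S : Set (Fin m → ℝ)} (hS : S.Nonempty) {p : MvPolynomial (Fin m) ℝ}
    {δ : ℝ} (hδ : ∀ x ∈ S, δ ≤ eval x p) : δ ≤ polyMinOn S p :=
  le_csInf (hS.image _) (by rintro t ⟨x, hx, rfl⟩; exact hδ x hx)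

lemma volume_le_integral {Xs : Set (Fin m → ℝ)} (hXsub : Xs ⊆ unitBox (Fin m))
    (hXm : MeasurableSet Xs) {w : MvPolynomial (Fin m) ℝ}
    (h1 : ∀ x ∈ Xs, 1 ≤ eval x w) (h0 : ∀ x ∈ unitBox (Fin m), 0 ≤ eval x w) :
    (volume Xs).toReal ≤ ∫ x in unitBox (Fin m), eval x w := by
  have hXfin : volume Xs ≠ ⊤ :=
    fun htop => unitBox_volume_ne_top (top_le_iff.mp (htop ▸ measure_mono hXsub))
  have hInt : IntegrableOn (fun x => eval x w) Xs volume :=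
    (integrableOn_eval w).mono_set hXsub
  have step1 : (volume Xs).toReal = ∫ _x in Xs, (1:ℝ) := by
    rw [setIntegral_const]; simp; rfl
  have step2 : (∫ _x in Xs, (1:ℝ)) ≤ ∫ x in Xs, eval x w := by
    refine setIntegral_mono_on (integrableOn_const hXfin) hInt hXm ?_
    exact fun x hx => h1 x hx
  have step3 : (∫ x in Xs, eval x w) ≤ ∫ x in unitBox (Fin m), eval x w := by
    refine setIntegral_mono_set (integrableOn_eval w) ?_ (HasSubset.Subset.eventuallyLE hXsub)
    exact (ae_restrict_iff' unitBox_measurable).2 (Filter.Eventually.of_forall h0)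
  linarith

-- Stone-Weierstrass on the box
instance : CompactSpace (unitBox (Fin m)) :=
  isCompact_iff_compactSpace.mp unitBox_compact

noncomputable def evalCM : MvPolynomial (Fin m) ℝ →ₐ[ℝ] C(unitBox (Fin m), ℝ) :=
  MvPolynomial.aeval (fun i =>
    ⟨fun x => (x : Fin m → ℝ) i, (continuous_apply i).comp continuous_subtype_val⟩)

lemma evalCM_apply (p : MvPolynomial (Fin m) ℝ) (x : unitBox (Fin m)) :
    evalCM p x = eval (x : Fin m → ℝ) p := by
  induction p using MvPolynomial.induction_on with
  | C a => simp [evalCM]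
  | add p q hp hq => simp only [map_add, ContinuousMap.add_apply, hp, hq]
  | mul_X p i hp =>
      rw [map_mul, ContinuousMap.mul_apply, hp, eval_mul, eval_X]
      congr 1
      show (evalCM (X i)) x = _
      rw [evalCM, aeval_X]
      rfl

lemma exists_poly_near (g : (Fin m → ℝ) → ℝ) (hg : Continuous g) {ζ : ℝ} (hζ : 0 < ζ) :
    ∃ q : MvPolynomial (Fin m) ℝ, ∀ x ∈ unitBox (Fin m), |eval x q - g x| ≤ ζ := by
  have sep : (evalCM (m := m)).range.SeparatesPoints := by
    intro x y hxy
    have : ∃ i, (x : Fin m → ℝ) i ≠ (y : Fin m → ℝ) i := by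
      by_contra hc
      push_neg at hc
      exact hxy (Subtype.ext (funext hc))
    obtain ⟨i, hi⟩ := this
    refine ⟨_, ⟨evalCM (X i), ⟨X i, rfl⟩, rfl⟩, ?_⟩
    simpa [evalCM_apply, eval_X] using hi
  obtain ⟨⟨gq, hgq⟩, hnear⟩ :=
    ContinuousMap.exists_mem_subalgebra_near_continuous_of_separatesPoints
      (evalCM (m := m)).range sep (fun x => g (x : Fin m → ℝ))
      (hg.comp continuous_subtype_val) ζ hζ
  obtain ⟨q, rfl⟩ := hgq
  refine ⟨q, fun x hx => ?_⟩
  have := hnear ⟨x, hx⟩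
  rw [Real.norm_eq_abs] at this
  rw [← evalCM_apply q ⟨x, hx⟩]
  exact this.le

-- corner construction
lemma max_neg_mul_self (y : ℝ) : max (-y) 0 * y = -(max (-y) 0)^2 := by
  rcases le_total y 0 with hy | hy
  · rw [max_eq_left (by linarith)]; ring
  · rw [max_eq_right (by linarith)]; ring

lemma abs_sq_diff_le {q g ζ G : ℝ} (h1 : |q - g| ≤ ζ) (h2 : |g| ≤ G) (hζ : ζ ≤ 1) :
    |q^2 - g^2| ≤ ζ*(2*G+1) := by
  have e : q^2 - g^2 = (q-g)*(q+g) := by ring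
  have h3 : |q+g| ≤ 2*G+1 := by
    have h4 : |q + g| ≤ |q - g| + 2*|g| := by
      have e2 : q + g = (q - g) + 2*g := by ring
      rw [e2]
      calc |(q-g) + 2*g| ≤ |q-g| + |2*g| := abs_add_le _ _
        _ = |q-g| + 2*|g| := by rw [abs_mul]; norm_num
    linarith
  rw [e, abs_mul]
  have h0 : (0:ℝ) ≤ ζ := le_trans (abs_nonneg _) h1
  exact mul_le_mul h1 h3 (abs_nonneg _) h0

lemma corner_V {r : ℕ} (h : Fin r → MvPolynomial (Fin m) ℝ) (hX : semialgSet h = ∅) :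
    ∃ (s : Fin r → MvPolynomial (Fin m) ℝ), (∀ i, IsSOS (s i)) ∧
      ∀ x ∈ unitBox (Fin m),
        0 ≤ 1 + eval x (∑ i, s i * h i) ∧ 1 + eval x (∑ i, s i * h i) ≤ 1/2 := by
  classical
  set a : Fin r → (Fin m → ℝ) → ℝ := fun i x => max (-(eval x (h i))) 0 with ha
  have ha_cont : ∀ i, Continuous (a i) :=
    fun i => ((MvPolynomial.continuous_eval (h i)).neg).max continuous_const
  have ha_nonneg : ∀ i x, 0 ≤ a i x := fun i x => le_max_right _ _
  set F : (Fin m → ℝ) → ℝ := fun x => ∑ i, (a i x)^2 with hF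
  have hF_cont : Continuous F := by
    apply continuous_finset_sum
    exact fun i _ => (ha_cont i).pow 2
  have hF_nonneg : ∀ x, 0 ≤ F x := fun x => Finset.sum_nonneg fun i _ => sq_nonneg _
  have hF_pos : ∀ x, 0 < F x := by
    intro x
    rcases (hF_nonneg x).lt_or_eq with hlt | heq
    · exact hlt
    · exfalso
      have hx : x ∈ semialgSet h := by
        intro i
        have hsq : (a i x)^2 = 0 := by
          have hall := Finset.sum_eq_zero_iff_of_nonneg
            (fun j (_ : j ∈ Finset.univ) => sq_nonneg (a j x))
          exact (hall.mp heq.symm) i (Finset.mem_univ i)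
        have hai : a i x = 0 := sq_eq_zero_iff.mp hsq
        by_contra hneg
        push_neg at hneg
        have : 0 < a i x := by
          rw [ha]; simp only []
          exact lt_max_of_lt_left (by linarith)
        linarith
      rw [hX] at hx
      exact hx
  have key : ∀ x, (∑ i, a i x * eval x (h i)) = -F x := by
    intro x
    rw [hF]
    simp only []
    rw [← Finset.sum_neg_distrib]
    refine Finset.sum_congr rfl fun i _ => ?_
    exact max_neg_mul_self (eval x (h i))
  have hHi : ∀ i, ∃ Mi : ℝ, 0 ≤ Mi ∧ ∀ x ∈ unitBox (Fin m), |eval x (h i)| ≤ Mi := by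
    intro i
    obtain ⟨x₀, hx₀, hmax⟩ := unitBox_compact.exists_isMaxOn unitBox_nonempty
      ((MvPolynomial.continuous_eval (h i)).abs.continuousOn)
    exact ⟨|eval x₀ (h i)|, abs_nonneg _, fun x hx => hmax hx⟩
  choose M hM0 hM using hHi
  set H : ℝ := 1 + ∑ i, M i with hHdef
  have hH1 : 1 ≤ H := by
    rw [hHdef]
    have : 0 ≤ ∑ i, M i := Finset.sum_nonneg fun i _ => hM0 i
    linarith
  have hHbd : ∀ i, ∀ x ∈ unitBox (Fin m), |eval x (h i)| ≤ H := by
    intro i x hx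
    have h1 := hM i x hx
    have h2 : M i ≤ ∑ j, M j :=
      Finset.single_le_sum (fun j _ => hM0 j) (Finset.mem_univ i)
    rw [hHdef]; linarith
  obtain ⟨x₁, hx₁, hmin⟩ := unitBox_compact.exists_isMinOn unitBox_nonempty
    hF_cont.continuousOn
  have hmin : ∀ x ∈ unitBox (Fin m), F x₁ ≤ F x := fun x hx => hmin hx
  set η : ℝ := F x₁ with hηdef
  have hη : 0 < η := hF_pos x₁
  set g : Fin r → (Fin m → ℝ) → ℝ := fun i x => Real.sqrt ((3/4) * a i x / F x) with hg
  have hg_cont : ∀ i, Continuous (g i) := by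
    intro i
    apply Real.continuous_sqrt.comp
    exact (continuous_const.mul (ha_cont i)).div hF_cont (fun x => (hF_pos x).ne')
  have hg_sq : ∀ i x, (g i x)^2 = (3/4) * a i x / F x := by
    intro i x
    rw [hg]
    exact Real.sq_sqrt (div_nonneg (mul_nonneg (by norm_num) (ha_nonneg i x)) (hF_pos x).le)
  have hg_sum : ∀ x, (∑ i, (g i x)^2 * eval x (h i)) = -(3/4) := by
    intro x
    have e1 : (∑ i, (g i x)^2 * eval x (h i))
        = (3/4) / F x * ∑ i, a i x * eval x (h i) := by
      rw [Finset.mul_sum]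
      refine Finset.sum_congr rfl fun i _ => ?_
      rw [hg_sq]
      field_simp
    rw [e1, key]
    have hFne : F x ≠ 0 := (hF_pos x).ne'
    rw [div_mul_eq_mul_div, div_eq_iff hFne]
    ring
  set G : ℝ := Real.sqrt (H / η) with hGdef
  have hG0 : 0 ≤ G := Real.sqrt_nonneg _
  have hg_bd : ∀ i, ∀ x ∈ unitBox (Fin m), |g i x| ≤ G := by
    intro i x hx
    have h0H : (0:ℝ) < H := lt_of_lt_of_le one_pos hH1
    have hax : a i x ≤ H := by
      rw [ha]
      simp only []
      apply max_le _ h0H.le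
      calc -(eval x (h i)) ≤ |eval x (h i)| := neg_le_abs _
        _ ≤ H := hHbd i x hx
    have hFx : η ≤ F x := hmin x hx
    rw [hg, hGdef]
    simp only []
    rw [abs_of_nonneg (Real.sqrt_nonneg _)]
    apply Real.sqrt_le_sqrt
    calc (3/4) * a i x / F x ≤ a i x / F x := by
          apply (div_le_div_iff_of_pos_right (hF_pos x)).mpr
          linarith [ha_nonneg i x]
      _ ≤ H / η := div_le_div₀ h0H.le hax hη hFx
  have h0H : (0:ℝ) < H := lt_of_lt_of_le one_pos hH1
  set ζ : ℝ := min 1 ((4*(r+1)*(2*G+1)*H)⁻¹) with hζdef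
  have hζpos : 0 < ζ := by
    apply lt_min one_pos
    apply inv_pos.mpr
    positivity
  have hζ1 : ζ ≤ 1 := min_le_left _ _
  have hζ2 : ζ ≤ (4*(r+1)*(2*G+1)*H)⁻¹ := min_le_right _ _
  have happrox : ∀ i, ∃ q : MvPolynomial (Fin m) ℝ,
      ∀ x ∈ unitBox (Fin m), |eval x q - g i x| ≤ ζ :=
    fun i => exists_poly_near (g i) (hg_cont i) hζpos
  choose q hq using happrox
  refine ⟨fun i => (q i)^2, fun i => isSOS_sq (q i), fun x hx => ?_⟩
  have heval : eval x (∑ i, (q i)^2 * h i) = ∑ i, (eval x (q i))^2 * eval x (h i) := by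
    rw [map_sum]
    refine Finset.sum_congr rfl fun i _ => ?_
    rw [map_mul, map_pow]
  have herr : |∑ i, (eval x (q i))^2 * eval x (h i) - (-(3/4))| ≤ 1/4 := by
    rw [← hg_sum x]
    have e2 : (∑ i, (eval x (q i))^2 * eval x (h i)) - (∑ i, (g i x)^2 * eval x (h i))
        = ∑ i, ((eval x (q i))^2 - (g i x)^2) * eval x (h i) := by
      rw [← Finset.sum_sub_distrib]
      refine Finset.sum_congr rfl fun i _ => by ring
    rw [e2]
    calc |∑ i, ((eval x (q i))^2 - (g i x)^2) * eval x (h i)|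
        ≤ ∑ i, |((eval x (q i))^2 - (g i x)^2) * eval x (h i)| :=
          Finset.abs_sum_le_sum_abs _ _
      _ ≤ ∑ _i : Fin r, ζ*(2*G+1)*H := by
          refine Finset.sum_le_sum fun i _ => ?_
          rw [abs_mul]
          exact mul_le_mul (abs_sq_diff_le (hq i x hx) (hg_bd i x hx) hζ1)
            (hHbd i x hx) (abs_nonneg _) (by positivity)
      _ = r * (ζ*(2*G+1)*H) := by
          rw [Finset.sum_const, Finset.card_univ, Fintype.card_fin, nsmul_eq_mul]
      _ ≤ 1/4 := by
          have step : ζ*(2*G+1)*H ≤ (4*(r+1):ℝ)⁻¹ := by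
            have e3 : ((4*(r+1)*(2*G+1)*H:ℝ))⁻¹ * ((2*G+1)*H) = ((4*(r+1):ℝ))⁻¹ := by
              field_simp
            calc ζ*(2*G+1)*H = ζ * ((2*G+1)*H) := by ring
              _ ≤ (4*(r+1)*(2*G+1)*H)⁻¹ * ((2*G+1)*H) := by
                  apply mul_le_mul_of_nonneg_right hζ2 (by positivity)
              _ = ((4*(r+1):ℝ))⁻¹ := e3
          have hr1 : (r:ℝ) ≥ 0 := Nat.cast_nonneg r
          have step2 : (r:ℝ) * ((4*(r+1):ℝ))⁻¹ ≤ 1/4 := by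
            rw [mul_inv_le_iff₀ (by positivity)]
            ring_nf
            nlinarith
          calc (r:ℝ) * (ζ*(2*G+1)*H) ≤ (r:ℝ) * ((4*(r+1):ℝ))⁻¹ :=
                mul_le_mul_of_nonneg_left step hr1
            _ ≤ 1/4 := step2
  rw [heval]
  constructor
  · cases abs_le.mp herr with
    | intro h1 h2 => linarith
  · cases abs_le.mp herr with
    | intro h1 h2 => linarith

-- rpow chain lemma
lemma chain_le {γ γm D B rat R e1 e2 E1 E2 ℓR : ℝ}
    (hγ : γ ≤ γm) (hγ0 : 0 ≤ γ) (hD0 : 0 ≤ D) (hD : D ≤ B) (hB1 : 1 ≤ B)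
    (hrat0 : 0 ≤ rat) (hrat : rat ≤ R) (hR1 : 1 ≤ R)
    (he1 : e1 ≤ E1) (he10 : 0 ≤ e1) (he2 : e2 ≤ E2) (he20 : 0 ≤ e2)
    (hb : γm * B ^ E1 * R ^ E2 ≤ ℓR) : γ * D ^ e1 * rat ^ e2 ≤ ℓR := by
  have t1 : D ^ e1 ≤ B ^ e1 := Real.rpow_le_rpow hD0 hD he10
  have t1' : B ^ e1 ≤ B ^ E1 := Real.rpow_le_rpow_of_exponent_le hB1 he1
  have t2 : rat ^ e2 ≤ R ^ e2 := Real.rpow_le_rpow hrat0 hrat he20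
  have t2' : R ^ e2 ≤ R ^ E2 := Real.rpow_le_rpow_of_exponent_le hR1 he2
  have hγm0 : 0 ≤ γm := hγ0.trans hγ
  have hBe : 0 ≤ D ^ e1 := Real.rpow_nonneg hD0 _
  have hBE : 0 ≤ B ^ E1 := Real.rpow_nonneg (by linarith) _
  have hRe : 0 ≤ rat ^ e2 := Real.rpow_nonneg hrat0 _
  have step : γ * D ^ e1 * rat ^ e2 ≤ γm * B ^ E1 * R ^ E2 := by
    apply mul_le_mul (mul_le_mul hγ (t1.trans t1') hBe hγm0) (t2.trans t2') hRe
    exact mul_nonneg hγm0 hBE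
  exact step.trans hb

lemma ell_lower {γm B R E1 E2 ℓR : ℝ} (hγ : 1 ≤ γm) (hB : 1 ≤ B) (hR : 1 ≤ R)
    (hE1 : 1 ≤ E1) (hE2 : 0 ≤ E2) (hb : γm * B ^ E1 * R ^ E2 ≤ ℓR) : B ≤ ℓR := by
  have h1 : B ^ (1:ℝ) ≤ B ^ E1 := Real.rpow_le_rpow_of_exponent_le hB hE1
  rw [Real.rpow_one] at h1
  have h2 : (1:ℝ) ≤ R ^ E2 := Real.one_le_rpow hR hE2
  have h3 : 0 ≤ B ^ E1 := Real.rpow_nonneg (le_trans zero_le_one hB) _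
  nlinarith [mul_nonneg h3 (by linarith : (0:ℝ) ≤ R ^ E2 - 1),
    mul_nonneg (mul_nonneg (by linarith : (0:ℝ) ≤ γm - 1) h3) (by linarith : (0:ℝ) ≤ R ^ E2)]

end Aux

set_option maxHeartbeats 2000000 in
/-- **Effective Putinar degree bound for volume computation.** -/
theorem volume_effective_putinar_bound
    {m r : ℕ} (hm : 1 ≤ m)
    (h : Fin r → MvPolynomial (Fin m) ℝ)
    (hsub : semialgSet h ⊆ unitBox (Fin m))
    (γ₁ γ₂ L : ℝ) (hγ₁ : 1 ≤ γ₁) (hγ₂ : 1 ≤ γ₂) (hL : 1 ≤ L)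
    (hput₁ : EffectivePutinar m h γ₁ L)
    (hput₂ : EffectivePutinar m (fun i : Fin m => 1 - X i ^ 2) γ₂ 1)
    (cG Cc : ℝ) (hcG : 1 ≤ cG) (hCc : 0 < Cc)
    (happ : ∀ d : ℕ, 1 ≤ d → ∃ w : MvPolynomial (Fin m) ℝ,
      w.totalDegree ≤ d ∧ (∀ x ∈ semialgSet h, 1 ≤ eval x w) ∧
      (∀ x ∈ unitBox (Fin m), 0 ≤ eval x w) ∧
      (∀ x ∈ unitBox (Fin m), eval x w ≤ cG) ∧
      (∫ x in unitBox (Fin m), eval x w) ≤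
        (MeasureTheory.volume (semialgSet h)).toReal + Cc / (2 * d)) :
    ∃ C' : ℝ, 0 < C' ∧ ∀ ε ∈ Set.Ioo (0 : ℝ) 1, ∀ ℓ : ℕ,
      max γ₁ γ₂ * (C' / ε) ^ (3.5 * (m : ℝ) * max L 1) *
          (1 + 2 ^ (m + 1) * cG / ε) ^ (2.5 * (m : ℝ) * max L 1) ≤ (ℓ : ℝ) →
      0 ≤ sInf {t : ℝ | ∃ w : MvPolynomial (Fin m) ℝ,
            memQM h ℓ (w - 1) ∧ memQM (fun i : Fin m => 1 - X i ^ 2) ℓ w ∧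
            t = ∫ x in unitBox (Fin m), eval x w} -
          (MeasureTheory.volume (semialgSet h)).toReal ∧
        sInf {t : ℝ | ∃ w : MvPolynomial (Fin m) ℝ,
            memQM h ℓ (w - 1) ∧ memQM (fun i : Fin m => 1 - X i ^ 2) ℓ w ∧
            t = ∫ x in unitBox (Fin m), eval x w} -
          (MeasureTheory.volume (semialgSet h)).toReal ≤ ε := by
  classical
  by_cases hXne : (semialgSet h).Nonempty
  · -- ======================= main case : X nonempty =======================
    refine ⟨Cc + 2, by linarith, ?_⟩
    rintro ε ⟨hε0, hε1⟩ ℓ hℓ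
    have hεle : ε ≤ 1 := le_of_lt hε1
    set lam := (MeasureTheory.volume (semialgSet h)).toReal with hlam
    have h2m1 : (1:ℝ) ≤ 2^(m+1) := one_le_pow₀ (by norm_num : (1:ℝ) ≤ 2)
    have h2mp : (0:ℝ) < 2^(m+1) := by positivity
    set δ : ℝ := ε / 2^(m+1) with hδdef
    have hδ0 : 0 < δ := div_pos hε0 h2mp
    have hδ1 : δ ≤ 1 := by
      rw [hδdef, div_le_one h2mp]; linarith
    set d : ℕ := ⌈Cc/ε⌉₊ + 1 with hddef
    have hd1 : 1 ≤ d := Nat.le_add_left 1 _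
    obtain ⟨w, hwdeg, hwX, hw0, hwcG, hwint⟩ := happ d hd1
    set W : MvPolynomial (Fin m) ℝ := w + C δ with hWdef
    have hevalW : ∀ x, eval x W = eval x w + δ := by
      intro x; rw [hWdef, map_add, eval_C]
    have hevalW1 : ∀ x, eval x (W - 1) = eval x w + δ - 1 := by
      intro x; rw [map_sub, map_one, hevalW]
    -- scalar bounds
    have hB1 : (1:ℝ) ≤ (Cc+2)/ε := by rw [le_div_iff₀ hε0]; nlinarith
    have hR0 : (0:ℝ) ≤ 2^(m+1)*cG/ε := by positivity
    have hR1 : (1:ℝ) ≤ 1 + 2^(m+1)*cG/ε := by linarith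
    have hmR : (1:ℝ) ≤ (m:ℝ) := by exact_mod_cast hm
    have hmaxL1 : (1:ℝ) ≤ max L 1 := le_max_right _ _
    have hmaxLL : max L 1 = L := max_eq_left hL
    have hγm : (1:ℝ) ≤ max γ₁ γ₂ := le_trans hγ₁ (le_max_left _ _)
    have hE10 : (0:ℝ) ≤ 3.5 * (m:ℝ) * L :=
      mul_nonneg (mul_nonneg (by norm_num) (Nat.cast_nonneg m)) (by linarith)
    have hE20 : (0:ℝ) ≤ 2.5 * (m:ℝ) * L :=
      mul_nonneg (mul_nonneg (by norm_num) (Nat.cast_nonneg m)) (by linarith)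
    have hE10' : (0:ℝ) ≤ 3.5 * (m:ℝ) * 1 :=
      mul_nonneg (mul_nonneg (by norm_num) (Nat.cast_nonneg m)) (by norm_num)
    have hE20' : (0:ℝ) ≤ 2.5 * (m:ℝ) * 1 :=
      mul_nonneg (mul_nonneg (by norm_num) (Nat.cast_nonneg m)) (by norm_num)
    -- degree bounds
    have hdleB : (d:ℝ) ≤ (Cc+2)/ε := by
      have hceil : (⌈Cc/ε⌉₊ : ℝ) < Cc/ε + 1 := Nat.ceil_lt_add_one (by positivity)
      have h2e : (2:ℝ) ≤ 2/ε := by rw [le_div_iff₀ hε0]; linarith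
      have hd' : (d:ℝ) = (⌈Cc/ε⌉₊ : ℝ) + 1 := by rw [hddef]; push_cast; ring
      have hsplit : (Cc+2)/ε = Cc/ε + 2/ε := by rw [add_div]
      rw [hd', hsplit]; linarith
    have hWm1eq : W - 1 = w + C (δ - 1) := by
      rw [hWdef, map_sub, C_1]; ring
    have hdeg1N : (W - 1).totalDegree ≤ d := by
      rw [hWm1eq]
      refine le_trans (totalDegree_add _ _) ?_
      rw [totalDegree_C]
      exact max_le hwdeg (Nat.zero_le d)
    have hdegWN : W.totalDegree ≤ d := by
      rw [hWdef]
      refine le_trans (totalDegree_add _ _) ?_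
      rw [totalDegree_C]
      exact max_le hwdeg (Nat.zero_le d)
    have hdeg1R : ((W - 1).totalDegree : ℝ) ≤ (Cc+2)/ε :=
      le_trans (by exact_mod_cast hdeg1N) hdleB
    have hdegWR : (W.totalDegree : ℝ) ≤ (Cc+2)/ε :=
      le_trans (by exact_mod_cast hdegWN) hdleB
    -- polyMinOn and polyNorm bounds for W - 1 over X
    have hmin1 : δ ≤ polyMinOn (semialgSet h) (W - 1) := by
      refine minOn_lower hXne fun x hx => ?_
      rw [hevalW1]
      have := hwX x hx
      linarith
    have hmin1pos : 0 < polyMinOn (semialgSet h) (W - 1) := lt_of_lt_of_le hδ0 hmin1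
    have hpn1 : polyNorm (W - 1) ≤ cG + δ := by
      refine polyNorm_le fun x hx => ?_
      rw [hevalW1]
      have h0 := hw0 x hx
      have hc := hwcG x hx
      rw [abs_le]
      constructor <;> linarith
    have hrat1 : polyNorm (W - 1) / polyMinOn (semialgSet h) (W - 1)
        ≤ 1 + 2^(m+1)*cG/ε := by
      have hdd : polyNorm (W - 1) / polyMinOn (semialgSet h) (W - 1) ≤ (cG + δ)/δ :=
        div_le_div₀ (by linarith) hpn1 hδ0 hmin1
      have heq : (cG + δ)/δ = 1 + 2^(m+1)*cG/ε := by
        rw [hδdef]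
        have h2 : ((2:ℝ))^(m+1) ≠ 0 := by positivity
        field_simp
        ring
      linarith
    have hrat10 : 0 ≤ polyNorm (W - 1) / polyMinOn (semialgSet h) (W - 1) :=
      div_nonneg (polyNorm_nonneg _) hmin1pos.le
    -- membership 1
    have mem1 : memQM h ℓ (W - 1) := by
      refine hput₁ (W - 1) ℓ hmin1pos ?_
      refine chain_le (le_max_left γ₁ γ₂) (by linarith) (Nat.cast_nonneg _) hdeg1R hB1
        hrat10 hrat1 hR1 (le_of_eq (by rw [hmaxLL])) hE10 (le_of_eq (by rw [hmaxLL]))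
        hE20 hℓ
    -- polyMinOn and polyNorm bounds for W over the box
    have hminB : δ ≤ polyMinOn (semialgSet (fun i : Fin m => 1 - X i ^ 2)) W := by
      rw [semialgSet_box]
      refine minOn_lower unitBox_nonempty fun x hx => ?_
      rw [hevalW]
      have := hw0 x hx
      linarith
    have hminBpos : 0 < polyMinOn (semialgSet (fun i : Fin m => 1 - X i ^ 2)) W :=
      lt_of_lt_of_le hδ0 hminB
    have hpnW : polyNorm W ≤ cG + δ := by
      refine polyNorm_le fun x hx => ?_
      rw [hevalW]
      have h0 := hw0 x hx
      have hc := hwcG x hx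
      rw [abs_le]
      constructor <;> linarith
    have hratW : polyNorm W / polyMinOn (semialgSet (fun i : Fin m => 1 - X i ^ 2)) W
        ≤ 1 + 2^(m+1)*cG/ε := by
      have hdd : polyNorm W / polyMinOn (semialgSet (fun i : Fin m => 1 - X i ^ 2)) W
          ≤ (cG + δ)/δ := div_le_div₀ (by linarith) hpnW hδ0 hminB
      have heq : (cG + δ)/δ = 1 + 2^(m+1)*cG/ε := by
        rw [hδdef]
        have h2 : ((2:ℝ))^(m+1) ≠ 0 := by positivity
        field_simp
        ring
      linarith
    have hratW0 : 0 ≤ polyNorm W / polyMinOn (semialgSet (fun i : Fin m => 1 - X i ^ 2)) W :=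
      div_nonneg (polyNorm_nonneg _) hminBpos.le
    have mem2 : memQM (fun i : Fin m => 1 - X i ^ 2) ℓ W := by
      refine hput₂ W ℓ hminBpos ?_
      refine chain_le (le_max_right γ₁ γ₂) (by linarith) (Nat.cast_nonneg _) hdegWR hB1
        hratW0 hratW hR1 ?_ hE10' ?_ hE20' hℓ
      · exact mul_le_mul_of_nonneg_left hmaxL1
          (mul_nonneg (by norm_num) (Nat.cast_nonneg m))
      · exact mul_le_mul_of_nonneg_left hmaxL1
          (mul_nonneg (by norm_num) (Nat.cast_nonneg m))
    -- the integral of W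
    have hintW : (∫ x in unitBox (Fin m), eval x W)
        = (∫ x in unitBox (Fin m), eval x w) + δ * 2^m := by
      have hcongr : (∫ x in unitBox (Fin m), eval x W)
          = ∫ x in unitBox (Fin m), (eval x w + δ) := by
        simp_rw [hevalW]
      rw [hcongr, MeasureTheory.integral_add (integrableOn_eval w)
        (MeasureTheory.integrableOn_const unitBox_volume_ne_top)]
      rw [MeasureTheory.setIntegral_const, MeasureTheory.measureReal_def, volume_unitBox_toReal, smul_eq_mul, mul_comm]
    have hδ2m : δ * 2^m = ε/2 := by
      rw [hδdef, pow_succ]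
      field_simp
    have hCcd : Cc/(2*(d:ℝ)) ≤ ε/2 := by
      have hdc : Cc/ε ≤ (d:ℝ) := by
        refine le_trans (Nat.le_ceil _) ?_
        rw [hddef]; push_cast; linarith
      have hd0 : (0:ℝ) < d := by exact_mod_cast hd1
      rw [div_le_div_iff₀ (by positivity) (by norm_num)]
      rw [div_le_iff₀ hε0] at hdc
      nlinarith
    have hWint : (∫ x in unitBox (Fin m), eval x W) ≤ lam + ε := by
      rw [hintW, hδ2m]
      linarith [hwint, hCcd]
    -- the feasible set
    have hTlower : ∀ t ∈ {t : ℝ | ∃ w : MvPolynomial (Fin m) ℝ,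
        memQM h ℓ (w - 1) ∧ memQM (fun i : Fin m => 1 - X i ^ 2) ℓ w ∧
        t = ∫ x in unitBox (Fin m), eval x w}, lam ≤ t := by
      rintro t ⟨w', hq1, hq2, rfl⟩
      refine volume_le_integral hsub (semialgSet_closed h).measurableSet ?_ ?_
      · intro x hx
        have := memQM_nonneg hq1 hx
        rw [map_sub, map_one] at this
        linarith
      · intro x hx
        exact memQM_nonneg hq2 (by rw [semialgSet_box]; exact hx)
    have hWmem : (∫ x in unitBox (Fin m), eval x W) ∈ {t : ℝ | ∃ w : MvPolynomial (Fin m) ℝ,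
        memQM h ℓ (w - 1) ∧ memQM (fun i : Fin m => 1 - X i ^ 2) ℓ w ∧
        t = ∫ x in unitBox (Fin m), eval x w} := ⟨W, mem1, mem2, rfl⟩
    have hs1 := le_csInf ⟨_, hWmem⟩ hTlower
    have hs2 := csInf_le ⟨lam, hTlower⟩ hWmem
    exact ⟨by linarith, by linarith⟩
  · -- ======================= corner case : X = ∅ =======================
    have hXempty : semialgSet h = ∅ := Set.not_nonempty_iff_eq_empty.mp hXne
    obtain ⟨s, hsSOS, hVbd⟩ := corner_V h hXempty
    set VV : MvPolynomial (Fin m) ℝ := 1 + ∑ i, s i * h i with hVVdef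
    have hVbd' : ∀ x ∈ unitBox (Fin m), 0 ≤ eval x VV ∧ eval x VV ≤ 1/2 := by
      intro x hx
      have := hVbd x hx
      rw [hVVdef, map_add, map_one]
      exact this
    set dV : ℕ := VV.totalDegree with hdVdef
    set c₂ : ℕ := Finset.univ.sup (fun i => (s i * h i).totalDegree) with hc₂def
    set Nc : ℕ := (m+2)*dV + c₂ + 1 with hNcdef
    have hNc1 : 1 ≤ Nc := Nat.le_add_left 1 _
    refine ⟨(Nc:ℝ), by exact_mod_cast Nat.lt_of_lt_of_le Nat.zero_lt_one hNc1, ?_⟩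
    rintro ε ⟨hε0, hε1⟩ ℓ hℓ
    have hεle : ε ≤ 1 := le_of_lt hε1
    have hγm : (1:ℝ) ≤ max γ₁ γ₂ := le_trans hγ₁ (le_max_left _ _)
    have hmR : (1:ℝ) ≤ (m:ℝ) := by exact_mod_cast hm
    have hmaxL1 : (1:ℝ) ≤ max L 1 := le_max_right _ _
    have hNcR : (1:ℝ) ≤ (Nc:ℝ) := by exact_mod_cast hNc1
    have hB1 : (1:ℝ) ≤ (Nc:ℝ)/ε := by rw [le_div_iff₀ hε0]; nlinarith
    have hR0 : (0:ℝ) ≤ 2^(m+1)*cG/ε := by positivity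
    have hR1 : (1:ℝ) ≤ 1 + 2^(m+1)*cG/ε := by linarith
    have hE11 : (1:ℝ) ≤ 3.5 * (m:ℝ) * max L 1 := by nlinarith
    have hE20 : (0:ℝ) ≤ 2.5 * (m:ℝ) * max L 1 := by nlinarith
    have hellB : (Nc:ℝ)/ε ≤ (ℓ:ℝ) := ell_lower hγm hB1 hR1 hE11 hE20 hℓ
    -- choice of the power
    set k : ℕ := ⌈1/ε⌉₊ with hkdef
    have hk1 : 1 ≤ k := Nat.one_le_ceil_iff.mpr (by positivity)
    have hkR : (1/ε : ℝ) ≤ (k:ℝ) := Nat.le_ceil _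
    have hinv1 : (1:ℝ) ≤ 1/ε := by rw [le_div_iff₀ hε0]; linarith
    have hkle : (k:ℝ) ≤ 2/ε := by
      have hc2 : (k:ℝ) < 1/ε + 1 := by
        rw [hkdef]
        exact Nat.ceil_lt_add_one (by positivity)
      have : (1:ℝ)/ε + 1 ≤ 2/ε := by
        rw [div_add' _ _ _ (ne_of_gt hε0), div_le_div_iff₀ hε0 hε0]
        nlinarith
      linarith
    set n : ℕ := m + k with hndef
    have hnle : (n:ℝ) ≤ ((m:ℝ)+2)/ε := by
      have hm' : (m:ℝ) ≤ (m:ℝ)/ε := by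
        rw [le_div_iff₀ hε0]
        nlinarith [(Nat.cast_nonneg m : (0:ℝ) ≤ (m:ℝ))]
      have hsplit : ((m:ℝ)+2)/ε = (m:ℝ)/ε + 2/ε := by rw [add_div]
      rw [hndef]
      push_cast
      linarith
    -- the witness polynomial
    set S : MvPolynomial (Fin m) ℝ := ∑ i ∈ Finset.range n, (VV^2)^i with hSdef
    have hSsos : IsSOS S := by
      refine isSOS_finsetSum _ _ fun i _ => ?_
      have : (VV^2)^i = (VV^i)^2 := by
        rw [← pow_mul, ← pow_mul, Nat.mul_comm]
      rw [this]
      exact isSOS_sq _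
    have hdegS : S.totalDegree ≤ 2*n*dV := by
      rw [hSdef]
      refine le_trans (totalDegree_finset_sum _ _) ?_
      refine Finset.sup_le fun i hi => ?_
      refine le_trans (totalDegree_pow _ _) ?_
      have h2 : (VV^2).totalDegree ≤ 2*dV := totalDegree_pow _ _
      calc i * (VV^2).totalDegree ≤ i * (2*dV) := Nat.mul_le_mul_left _ h2
        _ ≤ n * (2*dV) := Nat.mul_le_mul_right _ (le_of_lt (Finset.mem_range.mp hi))
        _ = 2*n*dV := by ring
    set W : MvPolynomial (Fin m) ℝ := VV^(2*n) with hWdef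
    -- degree budget
    have hdV0 : (0:ℝ) ≤ (dV:ℝ) := Nat.cast_nonneg _
    have hc₂0 : (0:ℝ) ≤ (c₂:ℝ) := Nat.cast_nonneg _
    have hdegBound : 2*n*dV + 2*c₂ ≤ 2*ℓ := by
      have hcast : ((2*n*dV + 2*c₂ : ℕ):ℝ) ≤ ((2*ℓ : ℕ):ℝ) := by
        push_cast
        have key1 : 2*(n:ℝ)*(dV:ℝ) ≤ 2*(dV:ℝ)*(((m:ℝ)+2)/ε) := by
          have := mul_le_mul_of_nonneg_left hnle (by positivity : (0:ℝ) ≤ 2*(dV:ℝ))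
          linarith
        have key2 : (2:ℝ)*(c₂:ℝ) ≤ 2*((c₂:ℝ)/ε) := by
          have : (c₂:ℝ) ≤ (c₂:ℝ)/ε := by
            rw [le_div_iff₀ hε0]
            nlinarith
          linarith
        have key3 : 2*(dV:ℝ)*(((m:ℝ)+2)/ε) + 2*((c₂:ℝ)/ε)
            = 2*(((m:ℝ)+2)*(dV:ℝ) + (c₂:ℝ))/ε := by
          field_simp
        have key4 : (((m:ℝ)+2)*(dV:ℝ) + (c₂:ℝ)) ≤ (Nc:ℝ) := by
          rw [hNcdef]
          push_cast
          linarith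
        have key5 : 2*(((m:ℝ)+2)*(dV:ℝ) + (c₂:ℝ))/ε ≤ 2*(Nc:ℝ)/ε :=
          (div_le_div_iff_of_pos_right hε0).mpr (by linarith)
        have key6 : 2*(Nc:ℝ)/ε ≤ 2*(ℓ:ℝ) := by
          rw [mul_div_assoc]
          linarith
        linarith
      exact_mod_cast hcast
    -- membership in the f-module
    have hWsq : W = (VV^n)^2 := by
      rw [hWdef, ← pow_mul, Nat.mul_comm]
    have mem2 : memQM (fun i : Fin m => 1 - X i ^ 2) ℓ W := by
      refine ⟨W, fun _ => 0, ?_, fun i => isSOS_zero, ?_, fun i => ?_, by simp⟩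
      · rw [hWsq]; exact isSOS_sq _
      · refine le_trans (totalDegree_pow _ _) ?_
        rw [← hdVdef]
        omega
      · rw [zero_mul, totalDegree_zero]
        exact Nat.zero_le _
    -- membership in the h-module
    have hVV1 : VV - 1 = ∑ i, s i * h i := by rw [hVVdef]; ring
    have hdegVV1 : (VV - 1).totalDegree ≤ c₂ := by
      rw [hVV1, hc₂def]
      exact le_trans (totalDegree_finset_sum _ _) le_rfl
    have hdegsihi : ∀ i, (s i * h i).totalDegree ≤ c₂ := fun i => by
      rw [hc₂def]
      exact Finset.le_sup (f := fun j => (s j * h j).totalDegree) (Finset.mem_univ i)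
    have hC2 : (C (2:ℝ) : MvPolynomial (Fin m) ℝ) = 2 := map_ofNat C 2
    have hgeom : S * (VV^2 - 1) = (VV^2)^n - 1 := geom_sum_mul (VV^2) n
    have hident : W - 1 = S * (VV-1)^2 + ∑ i, (C (2:ℝ) * (S * s i)) * h i := by
      have h1 : W = (VV^2)^n := by rw [hWdef, pow_mul]
      calc W - 1 = S * (VV^2 - 1) := by rw [h1, hgeom]
        _ = S * (VV-1)^2 + C (2:ℝ) * (S * (VV - 1)) := by rw [hC2]; ring
        _ = S * (VV-1)^2 + ∑ i, (C (2:ℝ) * (S * s i)) * h i := by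
            rw [hVV1, Finset.mul_sum, Finset.mul_sum]
            congr 1
            refine Finset.sum_congr rfl fun i _ => by ring
    have mem1 : memQM h ℓ (W - 1) := by
      refine ⟨S * (VV-1)^2, fun i => C (2:ℝ) * (S * s i),
        isSOS_mul hSsos (isSOS_sq _),
        fun i => isSOS_C_mul (by norm_num) (isSOS_mul hSsos (hsSOS i)), ?_, fun i => ?_,
        hident⟩
      · refine le_trans (totalDegree_mul _ _) ?_
        have hp2 : ((VV-1)^2).totalDegree ≤ 2*c₂ := by
          refine le_trans (totalDegree_pow _ _) ?_
          exact Nat.mul_le_mul_left 2 hdegVV1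
        omega
      · have e : (C (2:ℝ) * (S * s i)) * h i = C (2:ℝ) * (S * (s i * h i)) := by ring
        rw [e]
        refine le_trans (totalDegree_mul _ _) ?_
        rw [totalDegree_C]
        have h3 : (S * (s i * h i)).totalDegree ≤ 2*n*dV + c₂ := by
          refine le_trans (totalDegree_mul _ _) ?_
          exact Nat.add_le_add hdegS (hdegsihi i)
        omega
    -- bound on the integral
    have hW0 : ∀ x ∈ unitBox (Fin m), 0 ≤ eval x W := by
      intro x hx
      rw [hWdef, map_pow]
      exact pow_nonneg (hVbd' x hx).1 _
    have hWle : ∀ x ∈ unitBox (Fin m), eval x W ≤ (1/2:ℝ)^(2*n) := by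
      intro x hx
      rw [hWdef, map_pow]
      exact pow_le_pow_left₀ (hVbd' x hx).1 (hVbd' x hx).2 _
    have hintle : (∫ x in unitBox (Fin m), eval x W) ≤ (1/2:ℝ)^(2*n) * 2^m := by
      have step : (∫ x in unitBox (Fin m), eval x W)
          ≤ ∫ _x in unitBox (Fin m), (1/2:ℝ)^(2*n) := by
        refine MeasureTheory.setIntegral_mono_on (integrableOn_eval W)
          (MeasureTheory.integrableOn_const unitBox_volume_ne_top)
          unitBox_measurable ?_
        exact fun x hx => hWle x hx
      rw [MeasureTheory.setIntegral_const, MeasureTheory.measureReal_def, volume_unitBox_toReal, smul_eq_mul,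
        mul_comm] at step
      linarith
    have hnum : ((1/2:ℝ))^(2*n) * 2^m ≤ ε := by
      have e : ((1/2:ℝ))^(2*n) * 2^m = (1/2:ℝ)^m * (1/4:ℝ)^k := by
        rw [hndef]
        calc ((1/2:ℝ))^(2*(m+k)) * 2^m = ((1/4:ℝ))^(m+k) * 2^m := by rw [pow_mul]; norm_num
          _ = (1/4:ℝ)^m * 2^m * (1/4)^k := by rw [pow_add]; ring
          _ = ((1/4:ℝ)*2)^m * (1/4)^k := by rw [mul_pow]
          _ = (1/2:ℝ)^m * (1/4)^k := by norm_num
      have h12 : (1/2:ℝ)^m ≤ 1 := pow_le_one₀ (by norm_num) (by norm_num)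
      have h4k0 : (0:ℝ) < (1/4:ℝ)^k := by positivity
      have hk4 : (k:ℝ) ≤ (4:ℝ)^k := by
        exact_mod_cast (Nat.lt_pow_self (n := k) (by norm_num : 1 < 4)).le
      have hk0 : (0:ℝ) < (k:ℝ) := by exact_mod_cast hk1
      have h4k : (1/4:ℝ)^k ≤ 1/(k:ℝ) := by
        rw [one_div_pow]
        exact one_div_le_one_div_of_le hk0 hk4
      have h1k : 1/(k:ℝ) ≤ ε := by
        have := one_div_le_one_div_of_le (by positivity : (0:ℝ) < 1/ε) hkR
        rwa [one_div_one_div] at this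
      have hmul : (1/2:ℝ)^m * (1/4:ℝ)^k ≤ (1/4:ℝ)^k :=
        mul_le_of_le_one_left h4k0.le h12
      rw [e]
      linarith
    -- conclusion in the corner case
    have hT0 : ∀ t ∈ {t : ℝ | ∃ w : MvPolynomial (Fin m) ℝ,
        memQM h ℓ (w - 1) ∧ memQM (fun i : Fin m => 1 - X i ^ 2) ℓ w ∧
        t = ∫ x in unitBox (Fin m), eval x w}, (0:ℝ) ≤ t := by
      rintro t ⟨w', hq1, hq2, rfl⟩
      refine MeasureTheory.setIntegral_nonneg unitBox_measurable fun x hx => ?_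
      exact memQM_nonneg hq2 (by rw [semialgSet_box]; exact hx)
    have hWmem : (∫ x in unitBox (Fin m), eval x W) ∈ {t : ℝ | ∃ w : MvPolynomial (Fin m) ℝ,
        memQM h ℓ (w - 1) ∧ memQM (fun i : Fin m => 1 - X i ^ 2) ℓ w ∧
        t = ∫ x in unitBox (Fin m), eval x w} := ⟨W, mem1, mem2, rfl⟩
    have hs1 := le_csInf ⟨_, hWmem⟩ hT0
    have hs2 := csInf_le ⟨0, hT0⟩ hWmem
    have hvol0 : (MeasureTheory.volume (semialgSet h)).toReal = 0 := by
      rw [hXempty]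
      simp
    rw [hvol0]
    have hWε : (∫ x in unitBox (Fin m), eval x W) ≤ ε := le_trans hintle hnum
    constructor
    · rw [sub_zero]
      exact hs1
    · rw [sub_zero]
      exact le_trans hs2 hWε
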